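/- Let k ≥ 2, 1 ≤ ℓ < k and h ≥ 2 be integers with h(k−ℓ) ≥ k+1, and let C_{ℓ,h} be the k-uniform ℓ-cycle of length h. Then C_{ℓ,h} is strictly k-balanced. -/

import Mathlib

open MeasureTheory Finset Filter

noncomputable section
attribute [local instance] Classical.propDecidable

/-- A `k`-uniform hypergraph: a finite vertex set (of naturals) together with a
set of hyperedges, each of which is a `k`-subset of the vertex set. -/
structure UHypergraph (k : ℕ) where
  verts : Finset ℕ
  edges : Finset (Finset ℕ)
  edge_sub : ∀ e ∈ edges, e ⊆ verts
  edge_card : ∀ e ∈ edges, e.card = k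

namespace UHypergraph

variable {k : ℕ}

/-- `F'` is a subgraph of `F`. -/
def IsSubgraph (F' F : UHypergraph k) : Prop :=
  F'.verts ⊆ F.verts ∧ F'.edges ⊆ F.edges

/-- The degree `d_F(U)` of a vertex set `U`: the number of hyperedges containing `U`. -/
def deg (F : UHypergraph k) (U : Finset ℕ) : ℕ :=
  (F.edges.filter fun e => U ⊆ e).card

/-- The maximum `i`-degree `Δ_i(F)`. -/
def maxDeg (F : UHypergraph k) (i : ℕ) : ℕ :=
  (F.verts.powersetCard i).sup F.deg

/-- `F` is strictly `k`-balanced. -/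
def StrictlyBalanced (F : UHypergraph k) : Prop :=
  k + 1 ≤ F.verts.card ∧
  ∀ F' : UHypergraph k, F'.IsSubgraph F → F' ≠ F → k + 1 ≤ F'.verts.card →
    ((F'.edges.card : ℝ) - 1) / ((F'.verts.card : ℝ) - (k : ℝ)) <
      ((F.edges.card : ℝ) - 1) / ((F.verts.card : ℝ) - (k : ℝ))

/-- `h_i`: the maximum number of edges of a proper subgraph of `F` on `i` vertices. -/
def hsub (F : UHypergraph k) (i : ℕ) : ℕ :=
  sSup {m | ∃ F' : UHypergraph k, F'.IsSubgraph F ∧ F' ≠ F ∧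
    F'.verts.card = i ∧ F'.edges.card = m}

/-- `δ_i := i - k - (h_i - 1)(v-k)/(h-1)`. -/
def deltaI (F : UHypergraph k) (i : ℕ) : ℝ :=
  (i : ℝ) - (k : ℝ) -
    ((F.hsub i : ℝ) - 1) * ((F.verts.card : ℝ) - (k : ℝ)) / ((F.edges.card : ℝ) - 1)

/-- `δ := min_{k+1 ≤ i ≤ v} δ_i`. -/
def deltaMin (F : UHypergraph k) : ℝ :=
  sInf {x | ∃ i : ℕ, k + 1 ≤ i ∧ i ≤ F.verts.card ∧ x = F.deltaI i}

end UHypergraph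

variable {k : ℕ} {V : Type*} [DecidableEq V]

/-- The edge set of the image of `F` under a vertex map `φ`. -/
def copyEdges (F : UHypergraph k) (φ : ℕ → V) : Finset (Finset V) :=
  F.edges.image fun e => e.image φ

/-- `A` is (the edge set of) a copy of `F` inside the edge set `E`. -/
def IsCopy (F : UHypergraph k) (E A : Finset (Finset V)) : Prop :=
  ∃ φ : ℕ → V, Set.InjOn φ F.verts ∧ A = copyEdges F φ ∧ A ⊆ E

/-- `E` contains a copy of `F`. -/
def HasCopy (F : UHypergraph k) (E : Finset (Finset V)) : Prop :=
  ∃ A, IsCopy F E A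

/-- The greedy `F`-free process run on a list of candidate hyperedges: each edge
is added unless it would create a copy of `F`. -/
def greedy (F : UHypergraph k) (L : List (Finset V)) : Finset (Finset V) :=
  L.foldl (fun G e => if HasCopy F (insert e G) then G else insert e G) ∅

/-- An `(r,f)`-cluster (given by the edge sets of its `r` copies of `F`). -/
def IsCluster (F : UHypergraph k) (E : Finset (Finset V)) (f : Finset V) (r : ℕ)
    (c : Fin r → Finset (Finset V)) : Prop :=
  (∀ i, IsCopy F E (c i) ∧ f ∈ c i) ∧
  (∀ i : Fin r, 0 < (i : ℕ) → ∃ g ∈ c i, ∀ j, j < i → g ∉ c j)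

/-- `E` contains an `(r,f)`-cluster. -/
def HasCluster (F : UHypergraph k) (E : Finset (Finset V)) (f : Finset V) (r : ℕ) : Prop :=
  ∃ c : Fin r → Finset (Finset V), IsCluster F E f r c

/-- The number of `(r,f)`-clusters in `E`. -/
def clusterCount (F : UHypergraph k) (E : Finset (Finset V)) (f : Finset V) (r : ℕ) : ℕ :=
  Set.ncard {c : Fin r → Finset (Finset V) | IsCluster F E f r c}

/-- The hyperedges of the complete `k`-uniform hypergraph on `[n] = Fin n`. -/
def kSets (n k : ℕ) : Finset (Finset (Fin n)) :=
  Finset.univ.powersetCard k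

/-- The probability space of independent uniform-`[0,1]` birthtimes on the
(potential) hyperedges of `K_n^k`. -/
def birthμ (n : ℕ) : Measure (Finset (Fin n) → ℝ) :=
  Measure.pi fun _ => volume.restrict (Set.Icc (0 : ℝ) 1)

/-- The binomial random hypergraph `H_{n,p}`: the hyperedges with birthtime at most `p`. -/
def Hnp (n k : ℕ) (p : ℝ) (ω : Finset (Fin n) → ℝ) : Finset (Finset (Fin n)) :=
  (kSets n k).filter fun e => ω e ≤ p

/-- `H_{n,p}^-`: delete from `H_{n,p}` every hyperedge lying in a copy of `F`. -/
def HnpMinus (F : UHypergraph k) (n : ℕ) (p : ℝ) (ω : Finset (Fin n) → ℝ) :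
    Finset (Finset (Fin n)) :=
  (Hnp n k p ω).filter fun e => ¬ ∃ A, IsCopy F (Hnp n k p ω) A ∧ e ∈ A

/-- The greedy `F`-free process `R_{n,p}`: process the hyperedges with birthtime
at most `p` in increasing order of birthtime, adding each unless it creates a copy of `F`. -/
def Rproc (F : UHypergraph k) (n : ℕ) (β : Finset (Fin n) → ℝ) (p : ℝ) :
    Finset (Finset (Fin n)) :=
  greedy F ((((kSets n k).filter fun e => β e ≤ p).toList).mergeSort fun a b => β a ≤ β b)

/-- The maximum `i`-degree of a hypergraph on vertex set `Fin n` given by its edge set. -/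
def hostMaxDeg {n : ℕ} (E : Finset (Finset (Fin n))) (i : ℕ) : ℕ :=
  ((Finset.univ : Finset (Fin n)).powersetCard i).sup fun U =>
    (E.filter fun e => U ⊆ e).card

/-- The edge probability `p := 1/(c₂ (n^{v-k} log n)^{1/(h-1)})`. -/
def pval (c₂ : ℝ) (k v h n : ℕ) : ℝ :=
  1 / (c₂ * (((n : ℝ) ^ ((v : ℝ) - (k : ℝ)) * Real.log n) ^ ((1 : ℝ) / ((h : ℝ) - 1))))

/-- The degree bound `t := c₁ n p (log n)^{3/(d-1)}`. -/
def tval (c₁ c₂ : ℝ) (k v h d n : ℕ) : ℝ :=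
  c₁ * (n : ℝ) * pval c₂ k v h n * Real.log n ^ ((3 : ℝ) / ((d : ℝ) - 1))

/-- The subgraph `F̂` of `F`: all vertices of `F`, and those hyperedges meeting `U`
in at most `k-2` vertices. -/
def hatF (F : UHypergraph k) (U : Finset ℕ) : UHypergraph k where
  verts := F.verts
  edges := F.edges.filter fun e => (e ∩ U).card ≤ k - 2
  edge_sub := fun e he => F.edge_sub e (Finset.mem_filter.mp he).1
  edge_card := fun e he => F.edge_card e (Finset.mem_filter.mp he).1

/-- The neighbourhood `N_F(U)` of `U` in `F`. -/
def nbhd (F : UHypergraph k) (U : Finset ℕ) : Finset ℕ :=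
  F.verts.filter fun x => insert x U ∈ F.edges

/-- `S(H,T,V')`: the set of (edge sets of) copies of `F̂` in the edge set `E` mapping
`u i ↦ v' i`, `N_F(U)` into `T`, and `V(F) \ N_F(U)` outside `T`. -/
def Scopies (F : UHypergraph k) (U : Finset ℕ) (u : Fin (k - 1) → ℕ) {n : ℕ}
    (T : Finset (Fin n)) (v' : Fin (k - 1) → Fin n) (E : Finset (Finset (Fin n))) :
    Set (Finset (Finset (Fin n))) :=
  {A | ∃ φ : ℕ → Fin n, Set.InjOn φ F.verts ∧
    A = copyEdges (hatF F U) φ ∧ A ⊆ E ∧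
    (∀ i, φ (u i) = v' i) ∧
    (∀ x ∈ nbhd F U, φ x ∈ T) ∧
    (∀ x ∈ F.verts, x ∉ nbhd F U → φ x ∉ T)}

/-!
Number the vertices `0, …, hK - 1` with `K = k - ℓ` and cut them into the `h` blocks
`[qK, qK + K)`: the edge `e_i` is block `i` followed by the `ℓ` vertices after it. Let `F'` be a
proper subgraph whose edges are the `e_i` with `i ∈ S`, `|S| = m`. If these edges cover every
vertex, `F'` has all `hK` vertices but fewer than `h` edges. Otherwise pick `i ∈ S` closest
before an uncovered vertex: the `ℓ` vertices that `e_i` adds after its block lie in blocks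
outside `S`, so `F'` has at least `mK + ℓ` vertices and `(m - 1)/(|V(F')| - k) ≤ 1/K`, while
`(h - 1)/(hK - k) > 1/K` as `ℓ ≥ 1`. For `S = {i, i'}` the same count shows that distinct
indices give distinct edges.
-/

namespace UHypergraph

theorem ext {k : ℕ} {F G : UHypergraph k} (hV : F.verts = G.verts) (hE : F.edges = G.edges) :
    F = G := by
  cases F; cases G; congr

theorem IsSubgraph.card_edges_lt {k : ℕ} {F' F : UHypergraph k} (hsub : F'.IsSubgraph F)
    (hne : F' ≠ F) (hV : F'.verts = F.verts) : F'.edges.card < F.edges.card :=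
  card_lt_card (ssubset_of_subset_of_ne hsub.2 fun hE => hne (ext hV hE))

end UHypergraph

namespace Nat

theorem mod_eq_ite_of_lt_two_mul {a n : ℕ} (ha : a < 2 * n) :
    a % n = if a < n then a else a - n := by
  split_ifs with han
  · exact Nat.mod_eq_of_lt han
  · rw [Nat.mod_eq_sub_mod (by omega), Nat.mod_eq_of_lt (by omega)]

theorem mul_add_div_of_lt {K r : ℕ} (q : ℕ) (hr : r < K) : (q * K + r) / K = q := by
  rw [add_comm, Nat.add_mul_div_right _ _ (by omega), Nat.div_eq_of_lt hr, zero_add]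

theorem mul_add_mod_mul {K r : ℕ} (h a : ℕ) (hr : r < K) :
    (a * K + r) % (h * K) = a % h * K + r := by
  rw [mul_comm h K, Nat.mod_mul, Nat.mul_add_div_of_lt a hr, add_comm (a * K),
    Nat.add_mul_mod_self_right, Nat.mod_eq_of_lt hr, add_comm, mul_comm]

theorem add_mod_injOn (a n : ℕ) : Set.InjOn (fun j => (a + j) % n) (range n) := by
  intro j hj j' hj' hjj'
  have := Nat.ModEq.add_left_cancel' a hjj'
  rwa [Nat.ModEq, Nat.mod_eq_of_lt (mem_range.1 hj), Nat.mod_eq_of_lt (mem_range.1 hj')] at this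

end Nat

/-- The number of steps from `i` forward to `j` on the cycle `ℤ/h`, for `i, j < h`. -/
def cycDist (h i j : ℕ) : ℕ := (j + h - i) % h

section cycDist

variable {h i j : ℕ}

theorem add_cycDist_mod (hi : i < h) (hj : j < h) : (i + cycDist h i j) % h = j := by
  rw [cycDist, Nat.add_mod_mod, show i + (j + h - i) = j + h by omega, Nat.add_mod_right,
    Nat.mod_eq_of_lt hj]

theorem cycDist_add_mod {c : ℕ} (hi : i < h) (hj : j < h) (hc : c ≤ cycDist h i j) :
    cycDist h ((i + c) % h) j = cycDist h i j - c := by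
  unfold cycDist at hc ⊢
  rw [Nat.mod_eq_ite_of_lt_two_mul (a := j + h - i) (by omega)] at hc ⊢
  rw [Nat.mod_eq_ite_of_lt_two_mul (a := i + c) (by split_ifs at hc <;> omega)]
  split_ifs at hc ⊢ <;> rw [Nat.mod_eq_ite_of_lt_two_mul (by omega)] <;> split_ifs <;> omega

end cycDist

def cycleEdge (K ℓ h i : ℕ) : Finset ℕ :=
  (range (K + ℓ)).image fun j => (i * K + j) % (h * K)

def blockUnion (K : ℕ) (S : Finset ℕ) : Finset ℕ :=
  (S ×ˢ range K).image fun p => p.1 * K + p.2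

def cycleEdgeTail (K ℓ h i : ℕ) : Finset ℕ :=
  (Ico K (K + ℓ)).image fun j => (i * K + j) % (h * K)

theorem card_blockUnion (K : ℕ) (S : Finset ℕ) : (blockUnion K S).card = S.card * K := by
  rw [blockUnion, card_image_of_injOn, card_product, card_range]
  rintro ⟨q, r⟩ hqr ⟨q', r'⟩ hqr' heq
  simp only [coe_product, coe_range, Set.mem_prod, Set.mem_Iio] at hqr hqr'
  have hq := congrArg (· / K) heq
  simp only [Nat.mul_add_div_of_lt _ hqr.2, Nat.mul_add_div_of_lt _ hqr'.2] at hq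
  subst hq
  simpa using heq

section cycleEdge

variable {K ℓ h i : ℕ}

theorem pos_of_add_lt_mul (hv : K + ℓ < h * K) : 0 < K :=
  Nat.pos_of_ne_zero fun hK => by simp [hK] at hv

theorem card_cycleEdge (hv : K + ℓ ≤ h * K) : (cycleEdge K ℓ h i).card = K + ℓ := by
  rw [cycleEdge, card_image_of_injOn ((Nat.add_mod_injOn _ _).mono (by simpa using hv)),
    card_range]

theorem mul_add_mem_cycleEdge {r : ℕ} (hi : i < h) (hr : r < K) :
    i * K + r ∈ cycleEdge K ℓ h i :=
  mem_image.2 ⟨r, mem_range.2 (by omega), by rw [Nat.mul_add_mod_mul h i hr, Nat.mod_eq_of_lt hi]⟩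

theorem mem_cycleEdge_of_cycDist {x : ℕ} (hi : i < h) (hx : x < h * K)
    (hd : cycDist h i (x / K) * K + x % K < K + ℓ) : x ∈ cycleEdge K ℓ h i := by
  have hK : 0 < K := Nat.pos_of_ne_zero fun hK => by simp [hK] at hx
  refine mem_image.2 ⟨_, mem_range.2 hd, ?_⟩
  calc (i * K + (cycDist h i (x / K) * K + x % K)) % (h * K)
      = ((i + cycDist h i (x / K)) * K + x % K) % (h * K) := by ring_nf
    _ = x := by
      rw [Nat.mul_add_mod_mul h _ (Nat.mod_lt x hK),
        add_cycDist_mod hi (Nat.div_lt_of_lt_mul (by rwa [mul_comm])), Nat.div_add_mod']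

theorem blockUnion_subset_biUnion_cycleEdge {S : Finset ℕ} (hS : S ⊆ range h) :
    blockUnion K S ⊆ S.biUnion (cycleEdge K ℓ h) := by
  intro y hy
  obtain ⟨⟨q, r⟩, hqr, rfl⟩ := mem_image.1 hy
  rw [mem_product, mem_range] at hqr
  exact mem_biUnion.2 ⟨q, hqr.1, mul_add_mem_cycleEdge (mem_range.1 (hS hqr.1)) hqr.2⟩

theorem card_cycleEdgeTail (hv : K + ℓ ≤ h * K) : (cycleEdgeTail K ℓ h i).card = ℓ := by
  rw [cycleEdgeTail, card_image_of_injOn ((Nat.add_mod_injOn _ _).mono ?_), Nat.card_Ico]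
  · omega
  · intro j hj
    simp only [coe_Ico, Set.mem_Ico, coe_range, Set.mem_Iio] at hj ⊢
    omega

theorem cycleEdgeTail_subset_cycleEdge : cycleEdgeTail K ℓ h i ⊆ cycleEdge K ℓ h i :=
  image_subset_image fun _ hj => mem_range.2 (mem_Ico.1 hj).2

theorem disjoint_blockUnion_cycleEdgeTail (hK : 0 < K) {S : Finset ℕ} {d : ℕ}
    (hd : K + ℓ ≤ (d + 1) * K) (hgap : ∀ c, 0 < c → c ≤ d → (i + c) % h ∉ S) :
    Disjoint (blockUnion K S) (cycleEdgeTail K ℓ h i) := by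
  rw [disjoint_right]
  intro y hy hyS
  obtain ⟨j, hj, rfl⟩ := mem_image.1 hy
  obtain ⟨⟨q, r⟩, hqr, heq⟩ := mem_image.1 hyS
  rw [mem_Ico] at hj
  rw [mem_product, mem_range] at hqr
  have hq := congrArg (· / K) heq
  simp only [Nat.mul_add_div_of_lt _ hqr.2] at hq
  rw [mul_comm h K, Nat.mod_mul_right_div_self, add_comm, Nat.add_mul_div_right _ _ hK,
    add_comm] at hq
  refine hgap (j / K) (Nat.div_pos hj.1 hK) ?_ (hq ▸ hqr.1)
  exact Nat.lt_add_one_iff.1 (Nat.div_lt_of_lt_mul (k := d + 1) (by rw [mul_comm]; omega))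

theorem card_mul_add_le_card_biUnion_cycleEdge (hv : K + ℓ < h * K) {S : Finset ℕ}
    (hS : S ⊆ range h) (hSne : S.Nonempty)
    (hU : ¬ range (h * K) ⊆ S.biUnion (cycleEdge K ℓ h)) :
    S.card * K + ℓ ≤ (S.biUnion (cycleEdge K ℓ h)).card := by
  have hK := pos_of_add_lt_mul hv
  obtain ⟨x, hx, hxU⟩ := not_subset.1 hU
  rw [mem_range] at hx
  have hxK : x / K < h := Nat.div_lt_of_lt_mul (by rwa [mul_comm])
  -- `i` is the index of `S` closest before the block of `x`
  obtain ⟨i, hiS, hmin⟩ := S.exists_min_image (cycDist h · (x / K)) hSne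
  have hi : i < h := mem_range.1 (hS hiS)
  have hfar : K + ℓ ≤ (cycDist h i (x / K) + 1) * K := by
    have := Nat.mod_lt x hK
    have := not_lt.1 fun hlt => hxU (mem_biUnion.2 ⟨i, hiS, mem_cycleEdge_of_cycDist hi hx hlt⟩)
    rw [Nat.succ_mul]
    omega
  have hgap : ∀ c, 0 < c → c ≤ cycDist h i (x / K) → (i + c) % h ∉ S := fun c hc hcd hcS => by
    have := hmin _ hcS
    rw [cycDist_add_mod hi hxK hcd] at this
    omega
  calc S.card * K + ℓ = (blockUnion K S ∪ cycleEdgeTail K ℓ h i).card := by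
        rw [card_union_of_disjoint (disjoint_blockUnion_cycleEdgeTail hK hfar hgap),
          card_blockUnion, card_cycleEdgeTail hv.le]
    _ ≤ _ := card_le_card (union_subset (blockUnion_subset_biUnion_cycleEdge hS)
          (cycleEdgeTail_subset_cycleEdge.trans (subset_biUnion_of_mem (cycleEdge K ℓ h) hiS)))

theorem cycleEdge_injOn (hv : K + ℓ < h * K) : Set.InjOn (cycleEdge K ℓ h) (range h) := by
  intro i hi i' hi' heq
  by_contra hne
  have hpair : ({i, i'} : Finset ℕ).biUnion (cycleEdge K ℓ h) = cycleEdge K ℓ h i := by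
    rw [biUnion_insert, singleton_biUnion, ← heq, union_self]
  have := card_mul_add_le_card_biUnion_cycleEdge hv (S := {i, i'})
    (insert_subset hi (singleton_subset_iff.2 hi')) (insert_nonempty _ _) (fun hsub => by
      have := card_le_card (hsub.trans hpair.le)
      rw [card_range, card_cycleEdge hv.le] at this
      omega)
  rw [hpair, card_pair hne, card_cycleEdge hv.le] at this
  have hK := pos_of_add_lt_mul hv
  omega

theorem cycle_subgraph_cases (hv : K + ℓ < h * K) {C F' : UHypergraph (K + ℓ)}
    (hverts : C.verts = range (h * K)) (hedges : C.edges = (range h).image (cycleEdge K ℓ h))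
    (hsub : F'.IsSubgraph C) (hn : ℓ ≤ F'.verts.card) :
    F'.verts = C.verts ∨ F'.edges.card * K + ℓ ≤ F'.verts.card := by
  set S := (range h).filter (cycleEdge K ℓ h · ∈ F'.edges)
  have hS : S ⊆ range h := filter_subset _ _
  have hedgesS : F'.edges = S.image (cycleEdge K ℓ h) := by
    ext e
    constructor
    · intro he
      obtain ⟨i, hi, rfl⟩ := mem_image.1 (hedges ▸ hsub.2 he)
      exact mem_image_of_mem _ (mem_filter.2 ⟨hi, he⟩)
    · intro he
      obtain ⟨i, hi, rfl⟩ := mem_image.1 he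
      exact (mem_filter.1 hi).2
  have hcard : F'.edges.card = S.card := by
    rw [hedgesS, card_image_of_injOn ((cycleEdge_injOn hv).mono (coe_subset.2 hS))]
  have hU : S.biUnion (cycleEdge K ℓ h) ⊆ F'.verts :=
    biUnion_subset.2 fun i hi => F'.edge_sub _ (mem_filter.1 hi).2
  by_cases hcover : range (h * K) ⊆ S.biUnion (cycleEdge K ℓ h)
  · exact .inl (hsub.1.antisymm (hverts ▸ hcover.trans hU))
  · right
    rcases S.eq_empty_or_nonempty with hSe | hSne
    · simpa [hcard, hSe] using hn
    · rw [hcard]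
      exact (card_mul_add_le_card_biUnion_cycleEdge hv hS hSne hcover).trans (card_le_card hU)

theorem density_lt_of_mul_add_le {m n : ℕ} (hℓ : 1 ≤ ℓ) (hv : K + ℓ < h * K) (hn : K + ℓ < n)
    (hmn : m * K + ℓ ≤ n) :
    ((m : ℝ) - 1) / ((n : ℝ) - ((K + ℓ : ℕ) : ℝ)) <
      ((h : ℝ) - 1) / (((h * K : ℕ) : ℝ) - ((K + ℓ : ℕ) : ℝ)) := by
  have hK : (0 : ℝ) < K := by exact_mod_cast pos_of_add_lt_mul hv
  have hv' : ((K + ℓ : ℕ) : ℝ) < ((h * K : ℕ) : ℝ) := by exact_mod_cast hv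
  have hn' : ((K + ℓ : ℕ) : ℝ) < n := by exact_mod_cast hn
  have hmn' : ((m * K + ℓ : ℕ) : ℝ) ≤ n := by exact_mod_cast hmn
  have hℓ' : (1 : ℝ) ≤ ℓ := by exact_mod_cast hℓ
  push_cast at hv' hn' hmn' ⊢
  calc ((m : ℝ) - 1) / (n - (K + ℓ)) ≤ 1 / K := by
        rw [div_le_div_iff₀ (by linarith) hK]
        linarith
    _ < ((h : ℝ) - 1) / (h * K - (K + ℓ)) := by
        rw [div_lt_div_iff₀ hK (by linarith)]
        linarith

theorem cycle_strictlyBalanced (hℓ : 1 ≤ ℓ) (hv : K + ℓ < h * K) {C : UHypergraph (K + ℓ)}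
    (hverts : C.verts = range (h * K)) (hedges : C.edges = (range h).image (cycleEdge K ℓ h)) :
    C.StrictlyBalanced := by
  have hCV : C.verts.card = h * K := by rw [hverts, card_range]
  have hCE : C.edges.card = h := by
    rw [hedges, card_image_of_injOn (cycleEdge_injOn hv), card_range]
  refine ⟨hCV ▸ hv, fun F' hsub hne hn => ?_⟩
  rw [hCE, hCV]
  rcases cycle_subgraph_cases hv hverts hedges hsub (by omega) with hV | hmn
  · have hm : F'.edges.card < h := hCE ▸ UHypergraph.IsSubgraph.card_edges_lt hsub hne hV
    rw [hV, hCV]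
    exact div_lt_div_of_pos_right (by linarith [(Nat.cast_lt (α := ℝ)).2 hm])
      (sub_pos.2 (Nat.cast_lt.2 hv))
  · exact density_lt_of_mul_add_le hℓ hv hn hmn

end cycleEdge

theorem stmt_8_general (k ℓ h : ℕ) (hℓ1 : 1 ≤ ℓ)
    (hv : k + 1 ≤ h * (k - ℓ)) (C : UHypergraph k)
    (hverts : C.verts = Finset.range (h * (k - ℓ)))
    (hedges : C.edges = (Finset.range h).image
      (fun i => (Finset.range k).image (fun j => (i * (k - ℓ) + j) % (h * (k - ℓ))))) :
    C.StrictlyBalanced := by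
  have hℓk : ℓ ≤ k := by
    by_contra! hlt
    simp [Nat.sub_eq_zero_of_le hlt.le] at hv
  obtain ⟨K, rfl⟩ : ∃ K, k = K + ℓ := ⟨k - ℓ, (Nat.sub_add_cancel hℓk).symm⟩
  simp only [Nat.add_sub_cancel] at hv hverts hedges
  exact cycle_strictlyBalanced hℓ1 hv hverts hedges

/-- The k-uniform ℓ-cycle of length h is strictly k-balanced.
Its vertices are `0, …, h(k-ℓ)-1` in cyclic order and its hyperedges are
`e_i = {i(k-ℓ), …, i(k-ℓ)+k-1}` (indices mod `h(k-ℓ)`), for `i < h`. -/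
theorem stmt_8 (k ℓ h : ℕ) (hk : 2 ≤ k) (hℓ1 : 1 ≤ ℓ) (hℓk : ℓ < k) (hh : 2 ≤ h)
    (hv : k + 1 ≤ h * (k - ℓ)) (C : UHypergraph k)
    (hverts : C.verts = Finset.range (h * (k - ℓ)))
    (hedges : C.edges = (Finset.range h).image
      (fun i => (Finset.range k).image (fun j => (i * (k - ℓ) + j) % (h * (k - ℓ))))) :
    C.StrictlyBalanced :=
  stmt_8_general k ℓ h hℓ1 hv C hverts hedges
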